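/- arXiv:2311.03883 — 5 statements merged into one kernel-verified Lean document; each statement's English description precedes it below -/
import Mathlib

section
/- Let w be a complex number and let 0 ≤ γ₁ ≤ γ₂ be real numbers. If |1 + γ₂ w| ≤ 1, then |1 + γ₁ w| ≤ 1. Consequently, for any stability function R : ℂ → ℂ, the stability domain {z ∈ ℂ : |1 + γ₂(R(z) − 1)| ≤ 1} of the relaxed stability function with parameter γ₂ is contained in the stability domain {z ∈ ℂ : |1 + γ₁(R(z) − 1)| ≤ 1} with parameter γ₁. -/
/-! The closed unit disc is convex and contains both `1` and `1 + γ₂ w`, hence the whole segment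
between them, on which `1 + γ₁ w` lies. -/

open Set

theorem Convex.add_smul_mem_of_le {E : Type*} [AddCommGroup E] [Module ℝ E] {s : Set E}
    (hs : Convex ℝ s) {x v : E} {a b : ℝ} (ha : 0 ≤ a) (hab : a ≤ b) (hx : x ∈ s)
    (hb : x + b • v ∈ s) : x + a • v ∈ s := by
  rcases (ha.trans hab).eq_or_lt with hb0 | hb0
  · obtain rfl : a = 0 := le_antisymm (hab.trans_eq hb0.symm) ha
    simpa using hx
  · have hratio : a / b ∈ Icc (0 : ℝ) 1 := ⟨div_nonneg ha hb0.le, (div_le_one hb0).mpr hab⟩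
    have hscale : a • v = (a / b) • b • v := by rw [smul_smul, div_mul_cancel₀ a hb0.ne']
    rw [hscale]
    exact hs.add_smul_mem hx hb hratio

theorem norm_add_smul_le_of_le {E : Type*} [SeminormedAddCommGroup E] [NormedSpace ℝ E]
    {x v : E} {a b r : ℝ} (ha : 0 ≤ a) (hab : a ≤ b) (hx : ‖x‖ ≤ r) (hb : ‖x + b • v‖ ≤ r) :
    ‖x + a • v‖ ≤ r := by
  simpa using (convex_closedBall (0 : E) r).add_smul_mem_of_le ha hab
    (by simpa using hx) (by simpa using hb)

/-- If `|1 + γ₂ w| ≤ 1` and `0 ≤ γ₁ ≤ γ₂`, then `|1 + γ₁ w| ≤ 1`; consequently the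
stability domain of the relaxed stability function with parameter `γ₂` is contained in
the one with parameter `γ₁`. -/
theorem relaxed_stability_domain_monotone
    (γ₁ γ₂ : ℝ) (hγ₁ : 0 ≤ γ₁) (hγ₁₂ : γ₁ ≤ γ₂) :
    (∀ w : ℂ, ‖1 + (γ₂ : ℂ) * w‖ ≤ 1 → ‖1 + (γ₁ : ℂ) * w‖ ≤ 1) ∧
    (∀ R : ℂ → ℂ,
      {z : ℂ | ‖1 + (γ₂ : ℂ) * (R z - 1)‖ ≤ 1} ⊆
      {z : ℂ | ‖1 + (γ₁ : ℂ) * (R z - 1)‖ ≤ 1}) := by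
  have key (w : ℂ) (hw : ‖1 + (γ₂ : ℂ) * w‖ ≤ 1) : ‖1 + (γ₁ : ℂ) * w‖ ≤ 1 := by
    simp only [← Complex.real_smul] at hw ⊢
    exact norm_add_smul_le_of_le hγ₁ hγ₁₂ norm_one.le hw
  exact ⟨key, fun R z hz => key (R z - 1) hz⟩
end

section
/- Let R : ℂ → ℂ satisfy the L-stability limit condition that R(x) → 0 as x → −∞ along the negative real axis (which lies in the closed left half-plane). If γ > 2, then the relaxed stability function R_γ(z) = 1 + γ(R(z) − 1) is not A-stable: there exists z ∈ ℂ with Re z ≤ 0 and |R_γ(z)| > 1. Hence γ ≤ 2 is necessary for A-stability of the relaxed update of an L-stable method. -/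
/-! As `x → −∞` along the real axis, `R_γ(x) = 1 + γ (R(x) − 1)` tends to `1 − γ`, whose modulus
`γ − 1` exceeds `1` once `γ > 2`; so `|R_γ(x)| > 1` for all sufficiently negative real `x`. -/

open Filter Topology

theorem Filter.Tendsto.one_add_mul_sub_one {α A : Type*} [Ring A] [TopologicalSpace A]
    [IsTopologicalRing A] {l : Filter α} {f : α → A} (hf : Tendsto f l (𝓝 0)) (γ : A) :
    Tendsto (fun a => 1 + γ * (f a - 1)) l (𝓝 (1 - γ)) := by
  simpa [sub_eq_add_neg] using tendsto_const_nhds.add (hf.sub_const 1 |>.const_mul γ)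

theorem one_lt_norm_one_sub_ofReal {γ : ℝ} (hγ : 2 < γ) : 1 < ‖1 - (γ : ℂ)‖ := by
  rw [← Complex.ofReal_one, ← Complex.ofReal_sub, Complex.norm_real, Real.norm_eq_abs,
    abs_of_neg (by linarith)]
  linarith

open Filter in
/-- For an L-stable method (`R(x) → 0` as `x → −∞` along the real axis), `γ ≤ 2` is
necessary for A-stability of the relaxed update: if `γ > 2`, then the relaxed stability
function `R_γ(z) = 1 + γ(R(z) − 1)` is not A-stable. -/
theorem relaxed_L_stable_gamma_le_two_necessary
    (R : ℂ → ℂ)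
    (hL : Tendsto (fun x : ℝ => R (x : ℂ)) atBot (nhds 0))
    (γ : ℝ) (hγ : 2 < γ) :
    ∃ z : ℂ, z.re ≤ 0 ∧ 1 < ‖1 + (γ : ℂ) * (R z - 1)‖ := by
  have hlim := (hL.one_add_mul_sub_one γ).norm
  obtain ⟨x, hx, hx0⟩ :=
    ((hlim.eventually (lt_mem_nhds (one_lt_norm_one_sub_ofReal hγ))).and
      (eventually_le_atBot 0)).exists
  exact ⟨x, by simpa using hx0, hx⟩
end

section
/- Let R(z) = (1 + z/2)/(1 − z/2) be the stability function of the implicit midpoint method. For every γ > 1, the relaxed stability function R_γ(z) = 1 + γ(R(z) − 1) is not A-stable: there exists z ∈ ℂ with Re z ≤ 0 and |R_γ(z)| > 1. (Indeed R_γ(x) → 1 − 2γ as the real number x → −∞, and |1 − 2γ| > 1 for γ > 1.) -/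
open Filter Topology

lemma exists_re_nonpos_one_lt_norm_of_tendsto_atBot {S : ℂ → ℂ} {L : ℂ}
    (hS : Tendsto (fun x : ℝ => S x) atBot (𝓝 L)) (hL : 1 < ‖L‖) :
    ∃ z : ℂ, z.re ≤ 0 ∧ 1 < ‖S z‖ := by
  obtain ⟨x, hx_nonpos, hx⟩ :=
    ((eventually_le_atBot 0).and (hS.norm.eventually (lt_mem_nhds hL))).exists
  exact ⟨x, by simpa using hx_nonpos, hx⟩

lemma tendsto_midpoint_stability_atBot :
    Tendsto (fun x : ℝ => (1 + x / 2) / (1 - x / 2)) atBot (𝓝 (-1)) := by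
  have hrat : Tendsto (fun x : ℝ => (x⁻¹ + 1 / 2) / (x⁻¹ - 1 / 2)) atBot (𝓝 (-1)) := by
    have h := (tendsto_inv_atBot_zero.add_const (1 / 2 : ℝ)).div
      (tendsto_inv_atBot_zero.sub_const (1 / 2 : ℝ)) (by norm_num)
    norm_num at h
    exact h
  refine hrat.congr' ?_
  filter_upwards [eventually_lt_atBot 0] with x hx
  have hx0 : x ≠ 0 := hx.ne
  have hx2 : 2 - x ≠ 0 := by linarith
  field_simp

lemma tendsto_relaxed_midpoint_stability_atBot (γ : ℝ) :
    Tendsto (fun x : ℝ => 1 + (γ : ℂ) * ((1 + (x : ℂ) / 2) / (1 - (x : ℂ) / 2) - 1)) atBot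
      (𝓝 (1 - 2 * γ : ℝ)) := by
  have h := (Complex.continuous_ofReal.tendsto _).comp
    ((tendsto_midpoint_stability_atBot.sub_const 1).const_mul γ |>.const_add 1)
  convert h using 2 with x
  · simp
  · push_cast; ring

/-- For the implicit midpoint stability function `R(z) = (1 + z/2)/(1 − z/2)` and any
relaxation parameter `γ > 1`, the relaxed stability function
`R_γ(z) = 1 + γ(R(z) − 1)` is not A-stable. -/
theorem relaxed_implicit_midpoint_not_A_stable
    (γ : ℝ) (hγ : 1 < γ) :
    ∃ z : ℂ, z.re ≤ 0 ∧
      1 < ‖(1 + (γ : ℂ) * ((1 + z / 2) / (1 - z / 2) - 1))‖ := by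
  refine exists_re_nonpos_one_lt_norm_of_tendsto_atBot
    (tendsto_relaxed_midpoint_stability_atBot γ) ?_
  rw [Complex.norm_real, Real.norm_eq_abs, abs_of_neg (by linarith)]
  linarith
end

section
/- The stability function of the implicit two-derivative method HB-I2DRK3-2s, given by u^{n+1} = u^n + (Δt/3)(f(u^n) + 2 f(u^{n+1})) − (Δt²/6) g^{(2)}(u^{n+1}) applied to u' = λu, is R(z) = (1 + z/3)/(1 − 2z/3 + z²/6), and this method is both A-stable and L-stable: |R(z)| ≤ 1 for every z ∈ ℂ with Re z ≤ 0 (the denominator 1 − 2z/3 + z²/6 has no zeros in the closed left half-plane), and R(x) → 0 as the real number x → −∞. -/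
/-!
Clearing denominators, `R(z) = 2(z + 3)/((z - 2)² + 2)`. The poles `2 ± i√2` lie in the open
right half-plane, and for `z = x + iy` one has the identity
`|z² - 4z + 6|² - |2(z + 3)|² = y⁴ + x(x - 6)(x² - 2x + 12) + 2x(x - 4)y²`,
whose right-hand side is a sum of nonnegative terms when `x ≤ 0` (on the imaginary axis it
is the E-polynomial `y⁴`). L-stability holds because the numerator has lower degree than the
denominator: in the variable `w = z⁻¹`, `R` becomes `(2w + 6w²)/(1 - 4w + 6w²)`, which is
continuous at `w = 0` with value `0`.
-/

open Filter Topology Bornology Complex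

namespace HBI2DRK3

noncomputable def stabilityFun (z : ℂ) : ℂ := (1 + z / 3) / (1 - 2 * z / 3 + z ^ 2 / 6)

lemma stabilityFun_eq (z : ℂ) : stabilityFun z = 2 * (z + 3) / (z ^ 2 - 4 * z + 6) := by
  rw [stabilityFun, ← mul_div_mul_left _ _ (by norm_num : (6 : ℂ) ≠ 0)]
  congr 1 <;> ring

lemma sq_sub_four_mul_add_six_ne_zero {z : ℂ} (hz : z.re ≤ 0) : z ^ 2 - 4 * z + 6 ≠ 0 := by
  intro h
  have hre : (z.re - 2) ^ 2 - z.im ^ 2 + 2 = 0 := by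
    have := congrArg re h
    simp only [sq, sub_re, add_re, mul_re, re_ofNat, im_ofNat, zero_re] at this
    linear_combination this
  have him : 2 * (z.re - 2) * z.im = 0 := by
    have := congrArg im h
    simp only [sq, sub_im, add_im, mul_im, re_ofNat, im_ofNat, zero_im] at this
    linear_combination this
  have hy : z.im = 0 := (mul_eq_zero.mp him).resolve_left (by intro h; linarith)
  nlinarith [sq_nonneg (z.re - 2)]

lemma one_sub_two_mul_div_three_add_sq_div_six_ne_zero {z : ℂ} (hz : z.re ≤ 0) :
    1 - 2 * z / 3 + z ^ 2 / 6 ≠ 0 := by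
  have h : 1 - 2 * z / 3 + z ^ 2 / 6 = (z ^ 2 - 4 * z + 6) / 6 := by ring
  rw [h]
  exact div_ne_zero (sq_sub_four_mul_add_six_ne_zero hz) (by norm_num : (6 : ℂ) ≠ 0)

lemma normSq_den_sub_normSq_num (z : ℂ) :
    normSq (z ^ 2 - 4 * z + 6) - normSq (2 * (z + 3)) =
      z.im ^ 4 + z.re * (z.re - 6) * (z.re ^ 2 - 2 * z.re + 12) +
        2 * z.re * (z.re - 4) * z.im ^ 2 := by
  simp only [normSq_apply, sq, sub_re, add_re, mul_re, sub_im, add_im, mul_im, re_ofNat,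
    im_ofNat]
  ring

lemma norm_stabilityFun_le_one {z : ℂ} (hz : z.re ≤ 0) : ‖stabilityFun z‖ ≤ 1 := by
  have hden := sq_sub_four_mul_add_six_ne_zero hz
  have hnormSq : normSq (2 * (z + 3)) ≤ normSq (z ^ 2 - 4 * z + 6) := by
    rw [← sub_nonneg, normSq_den_sub_normSq_num]
    have h₁ : 0 ≤ z.re * (z.re - 6) := mul_nonneg_of_nonpos_of_nonpos hz (by linarith)
    have h₂ : 0 ≤ z.re * (z.re - 4) := mul_nonneg_of_nonpos_of_nonpos hz (by linarith)
    have h₃ : 0 ≤ z.re ^ 2 - 2 * z.re + 12 := by nlinarith [sq_nonneg (z.re - 1)]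
    nlinarith [mul_nonneg h₁ h₃, mul_nonneg h₂ (sq_nonneg z.im), sq_nonneg (z.im ^ 2)]
  rw [stabilityFun_eq, norm_div, div_le_one (norm_pos_iff.mpr hden)]
  rw [normSq_eq_norm_sq, normSq_eq_norm_sq] at hnormSq
  exact (sq_le_sq₀ (norm_nonneg _) (norm_nonneg _)).mp hnormSq

lemma tendsto_stabilityFun_cobounded : Tendsto stabilityFun (cobounded ℂ) (𝓝 0) := by
  let g : ℂ → ℂ := fun w => (2 * w + 6 * w ^ 2) / (1 - 4 * w + 6 * w ^ 2)
  have hg : ContinuousAt g 0 := by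
    apply ContinuousAt.div (by fun_prop) (by fun_prop)
    norm_num
  have hlim : Tendsto (g ∘ Inv.inv) (cobounded ℂ) (𝓝 0) := by
    simpa [g] using hg.tendsto.comp tendsto_inv₀_cobounded
  refine hlim.congr' ?_
  filter_upwards [eventually_ne_cobounded 0] with z hz
  rw [Function.comp_apply, stabilityFun_eq]
  simp only [g]
  field_simp
  ring

end HBI2DRK3

open Filter in
/-- The stability function of HB-I2DRK3-2s,
`u^{n+1} = u^n + (Δt/3)(f(u^n) + 2 f(u^{n+1})) − (Δt²/6) g⁽²⁾(u^{n+1})` applied to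
`u' = λu` (where `f(u) = λu` and `g⁽²⁾(u) = λ²u`), is
`R(z) = (1 + z/3)/(1 − 2z/3 + z²/6)` with `z = λΔt`; the method is A-stable and
L-stable, and the denominator has no zeros in the closed left half-plane. -/
theorem HB_I2DRK3_2s_stability_function_A_and_L_stable :
    (∀ lam Δt un un1 : ℂ,
        un1 = un + (Δt / 3) * (lam * un + 2 * (lam * un1)) -
          (Δt ^ 2 / 6) * (lam ^ 2 * un1) →
        (1 - 2 * (lam * Δt) / 3 + (lam * Δt) ^ 2 / 6) * un1 =
          (1 + (lam * Δt) / 3) * un) ∧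
    (∀ z : ℂ, z.re ≤ 0 → 1 - 2 * z / 3 + z ^ 2 / 6 ≠ 0) ∧
    (∀ z : ℂ, z.re ≤ 0 →
      ‖(1 + z / 3) / (1 - 2 * z / 3 + z ^ 2 / 6)‖ ≤ 1) ∧
    Tendsto (fun x : ℝ => (1 + (x : ℂ) / 3) / (1 - 2 * (x : ℂ) / 3 + (x : ℂ) ^ 2 / 6))
      atBot (nhds 0) := by
  refine ⟨fun lam Δt un un1 h => by linear_combination h,
    fun z => HBI2DRK3.one_sub_two_mul_div_three_add_sq_div_six_ne_zero,
    fun z => HBI2DRK3.norm_stabilityFun_le_one, ?_⟩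
  exact HBI2DRK3.tendsto_stabilityFun_cobounded.comp (RCLike.tendsto_ofReal_atBot_cobounded ℂ)
end

section
/- Let ε ≠ 0 be a real number and define u : ℝ → ℝ² by u(t) = e^{−εt} (cos φ(t), sin φ(t)) with φ(t) = (e^{2εt} − 1)/(2ε). Then u(0) = (1, 0) and u is differentiable with u'(t) = (−u₂(t), u₁(t)) / ‖u(t)‖² − ε u(t) for all t, i.e., u is the analytical solution of the damped nonlinear oscillator. -/
/-! In polar form `u = r (cos θ, sin θ)` the oscillator becomes `r' = -ε r`, `θ' = 1 / r²`.
So `r = e^{-εt}`, and `θ = φ` works because `φ' = e^{2εt} = 1 / r²`. -/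

open Real

theorem hasDerivAt_exp_mul_sub_one_div {c : ℝ} (hc : c ≠ 0) (t : ℝ) :
    HasDerivAt (fun s => (exp (c * s) - 1) / c) (exp (c * t)) t := by
  have h := (((hasDerivAt_id t).const_mul c).exp.sub_const 1).div_const c
  simpa [mul_div_cancel_right₀ _ hc] using h

theorem polar_sq_add_sq (r θ : ℝ) : (r * cos θ) ^ 2 + (r * sin θ) ^ 2 = r ^ 2 := by
  linear_combination r ^ 2 * cos_sq_add_sin_sq θ

section PolarCurve

variable {r θ : ℝ → ℝ} {ε t : ℝ}

theorem hasDerivAt_polar_cos (hr : HasDerivAt r (-ε * r t) t) (hθ : HasDerivAt θ (r t ^ 2)⁻¹ t)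
    (hr₀ : r t ≠ 0) :
    HasDerivAt (fun s => r s * cos (θ s))
      (-(r t * sin (θ t)) / ((r t * cos (θ t)) ^ 2 + (r t * sin (θ t)) ^ 2)
        - ε * (r t * cos (θ t))) t := by
  refine (hr.mul hθ.cos).congr_deriv ?_
  rw [polar_sq_add_sq]
  field_simp
  ring

theorem hasDerivAt_polar_sin (hr : HasDerivAt r (-ε * r t) t) (hθ : HasDerivAt θ (r t ^ 2)⁻¹ t)
    (hr₀ : r t ≠ 0) :
    HasDerivAt (fun s => r s * sin (θ s))
      ((r t * cos (θ t)) / ((r t * cos (θ t)) ^ 2 + (r t * sin (θ t)) ^ 2)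
        - ε * (r t * sin (θ t))) t := by
  refine (hr.mul hθ.sin).congr_deriv ?_
  rw [polar_sq_add_sq]
  field_simp
  ring

end PolarCurve

/-- For `ε ≠ 0`, the function `u(t) = e^{−εt}(cos φ(t), sin φ(t))` with
`φ(t) = (e^{2εt} − 1)/(2ε)` satisfies `u(0) = (1, 0)` and solves the damped nonlinear
oscillator `u' = (−u₂, u₁)/‖u‖² − ε u` (written componentwise, with
`‖u(t)‖² = u₁(t)² + u₂(t)²` the squared Euclidean norm). -/
theorem damped_nonlinear_oscillator_exact_solution
    (ε : ℝ) (hε : ε ≠ 0)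
    (φ : ℝ → ℝ) (hφ : ∀ t, φ t = (exp (2 * ε * t) - 1) / (2 * ε))
    (u₁ u₂ : ℝ → ℝ)
    (hu₁ : ∀ t, u₁ t = exp (-ε * t) * cos (φ t))
    (hu₂ : ∀ t, u₂ t = exp (-ε * t) * sin (φ t)) :
    u₁ 0 = 1 ∧ u₂ 0 = 0 ∧
    (∀ t : ℝ,
      HasDerivAt u₁ (-u₂ t / (u₁ t ^ 2 + u₂ t ^ 2) - ε * u₁ t) t ∧
      HasDerivAt u₂ (u₁ t / (u₁ t ^ 2 + u₂ t ^ 2) - ε * u₂ t) t) := by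
  obtain rfl : φ = fun t => (exp (2 * ε * t) - 1) / (2 * ε) := funext hφ
  obtain rfl : u₁ = fun t => exp (-ε * t) * cos ((exp (2 * ε * t) - 1) / (2 * ε)) := funext hu₁
  obtain rfl : u₂ = fun t => exp (-ε * t) * sin ((exp (2 * ε * t) - 1) / (2 * ε)) := funext hu₂
  refine ⟨by simp, by simp, fun t => ?_⟩
  have hr : HasDerivAt (fun s => exp (-ε * s)) (-ε * exp (-ε * t)) t := by
    simpa [mul_comm] using ((hasDerivAt_id t).const_mul (-ε)).exp
  have hθ : HasDerivAt (fun s => (exp (2 * ε * s) - 1) / (2 * ε)) (exp (-ε * t) ^ 2)⁻¹ t := by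
    convert hasDerivAt_exp_mul_sub_one_div (mul_ne_zero two_ne_zero hε) t using 1
    rw [← exp_nat_mul, ← exp_neg]
    ring_nf
  exact ⟨hasDerivAt_polar_cos hr hθ (exp_ne_zero _), hasDerivAt_polar_sin hr hθ (exp_ne_zero _)⟩
end
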